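/- arXiv:1703.09331 — 7 statements merged into one kernel-verified Lean document; each statement's English description precedes it below -/
import Mathlib

section
/- For any subset S of ℕ^n and any k ∈ ℕ, the set of elements s ∈ S such that the down-set {u ∈ S : u ≤ s} (coordinatewise order) has cardinality at most k+1 is finite. -/
/-!
By Dickson's lemma `ℕ^n` is well-quasi-ordered, so an infinite set of points of `S` with small
down-sets would contain a monotone injective sequence `s₀ ≤ s₁ ≤ ⋯`; then `s_{k+1}` lies above the
`k + 2` points `s₀, …, s_{k+1}` of `S`.
-/

open Set

theorem Set.IsPWO.exists_lt_encard_inter_Iic {α : Type*} [Preorder α] {T : Set α}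
    (hpwo : T.IsPWO) (hinf : T.Infinite) (m : ℕ) : ∃ s ∈ T, m < (T ∩ Iic s).encard := by
  obtain ⟨f, hf⟩ := hinf.natEmbedding
  obtain ⟨g, hmono⟩ := hpwo.exists_monotone_subseq (f := fun i => (f i : α)) fun i => (f i).2
  have hinj : InjOn (fun i => (f (g i) : α)) (Iic m) :=
    fun _ _ _ _ h => g.injective (hf (Subtype.coe_injective h))
  have hsub : (fun i => (f (g i) : α)) '' Iic m ⊆ T ∩ Iic (f (g m) : α) := by
    rintro _ ⟨i, hi, rfl⟩
    exact ⟨(f (g i)).2, hmono hi⟩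
  refine ⟨f (g m), (f (g m)).2, ?_⟩
  calc (m : ℕ∞) < (Iic m).encard := by
        rw [← Finset.coe_Iic, encard_coe_eq_coe_finsetCard, Nat.card_Iic]; norm_cast; omega
    _ = ((fun i => (f (g i) : α)) '' Iic m).encard := hinj.encard_image.symm
    _ ≤ (T ∩ Iic (f (g m) : α)).encard := encard_le_encard hsub

theorem stmt_0 (n k : ℕ) (S : Set (Fin n → ℕ)) :
    {s ∈ S | ({u ∈ S | u ≤ s}).ncard ≤ k + 1}.Finite := by
  set T := {s ∈ S | ({u ∈ S | u ≤ s}).ncard ≤ k + 1}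
  by_contra hinf
  obtain ⟨s, ⟨-, hs⟩, hlt⟩ :=
    (isPWO_of_wellQuasiOrderedLE T).exists_lt_encard_inter_Iic hinf (k + 1)
  have hdown : T ∩ Iic s ⊆ {u ∈ S | u ≤ s} := fun u ⟨hu, hus⟩ => ⟨hu.1, hus⟩
  have hfin : {u ∈ S | u ≤ s}.Finite := (finite_Iic s).subset fun _ hu => hu.2
  have hcontra : ((k + 1 : ℕ) : ℕ∞) < k + 1 := calc
    ((k + 1 : ℕ) : ℕ∞) < (T ∩ Iic s).encard := hlt
    _ ≤ {u ∈ S | u ≤ s}.encard := encard_le_encard hdown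
    _ = ({u ∈ S | u ≤ s}.ncard : ℕ∞) := hfin.cast_ncard_eq.symm
    _ ≤ k + 1 := by exact_mod_cast hs
  exact lt_irrefl _ hcontra
end

section
/- If A ⊆ ℤ^n and the neighbor complex Nb(A) has finite dimension d (every simplex has at most d+1 vertices), then Nb(A) is locally finite: every a ∈ A has only finitely many A-neighbors. -/
/-!
If `a` had infinitely many neighbors `b₀, b₁, …`, then, the joins `a ⊔ bₖ` being integer points
above `a`, Dickson's lemma yields a subsequence along which they increase. Any initial segment
`{b₀, …, bₘ₋₁}` of it has `vsup` below that of the neighbor pair `{a, bₘ}`, so it is a simplex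
as well, and these simplices have unbounded size.
-/

/-- The coordinatewise supremum of `B ⊆ ℝ^n`, valued in `(ℝ ∪ {±∞})^n`. -/
noncomputable def vsup {n : ℕ} (B : Set (Fin n → ℝ)) : Fin n → EReal :=
  fun i => ⨆ b ∈ B, ((b i : ℝ) : EReal)

/-- `B` is a simplex of the neighbor complex of `A`. -/
def Nb {n : ℕ} (A B : Set (Fin n → ℝ)) : Prop :=
  B ⊆ A ∧ ¬ ∃ a ∈ A, ∀ i, ((a i : ℝ) : EReal) < vsup B i

open Set Function

theorem isPWO_pi_image_intCast_Ici {ι R : Type*} [Finite ι] [AddCommGroupWithOne R]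
    [PartialOrder R] [AddLeftMono R] [ZeroLEOneClass R] (c : ι → ℤ) :
    (univ.pi fun i => ((↑) : ℤ → R) '' Ici (c i)).IsPWO :=
  IsPWO.pi fun _ => bddBelow_Ici.isWF.isPWO.image_of_monotone Int.cast_mono

section NeighborComplex

variable {n : ℕ}

theorem vsup_pair_apply (a b : Fin n → ℝ) (i : Fin n) :
    vsup {a, b} i = (((a ⊔ b) i : ℝ) : EReal) := by
  simp only [vsup, iSup_insert, iSup_singleton, Pi.sup_apply]
  exact (EReal.coe_strictMono.monotone.map_max).symm

theorem vsup_le_vsup_pair {B : Set (Fin n → ℝ)} {a c : Fin n → ℝ} (h : ∀ x ∈ B, x ≤ a ⊔ c) :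
    vsup B ≤ vsup {a, c} := fun i => by
  rw [vsup_pair_apply]
  exact iSup₂_le fun x hx => EReal.coe_le_coe_iff.2 (h x hx i)

theorem Nb.of_vsup_le {A B C : Set (Fin n → ℝ)} (hC : Nb A C) (hBA : B ⊆ A)
    (h : vsup B ≤ vsup C) : Nb A B :=
  ⟨hBA, fun ⟨a, ha, hlt⟩ => hC.2 ⟨a, ha, fun i => (hlt i).trans_le (h i)⟩⟩

theorem exists_nb_le_card_of_monotone_sup {A : Set (Fin n → ℝ)} {a : Fin n → ℝ}
    {c : ℕ → Fin n → ℝ} (hc : Injective c) (hcA : ∀ k, c k ∈ A) (hnb : ∀ k, Nb A {a, c k})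
    (hmono : Monotone fun k => a ⊔ c k) (m : ℕ) :
    ∃ B : Finset (Fin n → ℝ), Nb A B ∧ m ≤ B.card := by
  classical
  refine ⟨(Finset.range m).image c, (hnb m).of_vsup_le ?_ (vsup_le_vsup_pair ?_), ?_⟩
  · simp only [Finset.coe_image, image_subset_iff]
    exact fun k _ => hcA k
  · simp only [Finset.coe_image, mem_image, Finset.mem_coe, Finset.mem_range]
    rintro _ ⟨k, hk, rfl⟩
    exact le_sup_right.trans (hmono hk.le)
  · rw [Finset.card_image_of_injective _ hc, Finset.card_range]

end NeighborComplex

/-- Main theorem: if `A ⊆ ℤ^n` and `Nb A` has finite dimension `d`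
(every simplex has at most `d+1` vertices), then every `a ∈ A` has
only finitely many `A`-neighbors. -/
theorem stmt_5 (n d : ℕ) (A : Set (Fin n → ℝ))
    (hint : ∀ a ∈ A, ∀ i, ∃ m : ℤ, a i = (m : ℝ))
    (hdim : ∀ B, Nb A B → B.Finite ∧ B.ncard ≤ d + 1) :
    ∀ a ∈ A, {b ∈ A | Nb A {a, b}}.Finite := by
  intro a ha
  by_contra hinf
  let e := Set.Infinite.natEmbedding _ hinf
  let b : ℕ → Fin n → ℝ := fun k => e k
  have hb : ∀ k, b k ∈ A ∧ Nb A {a, b k} := fun k => (e k).2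
  have hjoin : ∀ k, a ⊔ b k ∈ univ.pi fun i => ((↑) : ℤ → ℝ) '' Ici ⌊a i⌋ := by
    intro k i _
    obtain ⟨m, hm⟩ := hint a ha i
    obtain ⟨m', hm'⟩ := hint (b k) (hb k).1 i
    refine ⟨max m m', ?_, ?_⟩
    · simp only [hm, Int.floor_intCast, mem_Ici, le_max_left]
    · simp only [Pi.sup_apply, hm, hm', Int.cast_max]
  obtain ⟨g, hg⟩ := (isPWO_pi_image_intCast_Ici _).exists_monotone_subseq hjoin
  have hbg : Injective (b ∘ g) := fun k l h => g.injective (e.injective (Subtype.ext h))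
  obtain ⟨B, hB, hcard⟩ := exists_nb_le_card_of_monotone_sup hbg (fun k => (hb (g k)).1)
    (fun k => (hb (g k)).2) hg (d + 2)
  have := (hdim _ hB).2
  rw [ncard_coe_finset] at this
  omega
end

section
/- Fix an orthant P of ℝ^n (the set of points whose i-th coordinate has sign ε_i ∈ {+,−} for a fixed sign vector ε), ordered by a ≤_P b iff b − a ∈ P. If A ⊆ ℤ^n, Nb(A) has dimension d, 0 ∈ A, and b ∈ A ∩ P is an A-neighbor of 0, then the down-set {u ∈ A ∩ P : u ≤_P b} has cardinality at most d+1. -/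
/-!
Every point `u` of the `P`-cuboid between `0` and `b` satisfies `u ≤ max 0 b` coordinatewise,
so the down-set of `b` has coordinatewise supremum at most that of `{0, b}`. Since the
defining condition of `Nb A` only gets weaker as the supremum decreases, the down-set is itself
a simplex of `Nb A`, and the dimension bound applies to it.
-/

theorem vsup_pair {n : ℕ} (x y : Fin n → ℝ) (i : Fin n) :
    vsup {x, y} i = ((max (x i) (y i) : ℝ) : EReal) := by
  simp only [vsup, iSup_pair]
  exact EReal.coe_strictMono.monotone.map_max.symm

theorem Nb.of_vsup_le_s6 {n : ℕ} {A S T : Set (Fin n → ℝ)} (hT : Nb A T) (hSA : S ⊆ A)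
    (hle : ∀ i, vsup S i ≤ vsup T i) : Nb A S :=
  ⟨hSA, fun ⟨a, ha, hlt⟩ => hT.2 ⟨a, ha, fun i => (hlt i).trans_le (hle i)⟩⟩

theorem le_max_zero_of_mem_orthant_cuboid {ε u b : ℝ} (hε : ε = 1 ∨ ε = -1)
    (hu : 0 ≤ ε * u) (hbu : 0 ≤ ε * (b - u)) : u ≤ max 0 b := by
  rcases hε with rfl | rfl
  · exact le_max_of_le_right (by linarith)
  · exact le_max_of_le_left (by linarith)

theorem stmt_6_general (n d : ℕ) (A : Set (Fin n → ℝ))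
    (ε : Fin n → ℝ) (hε : ∀ i, ε i = 1 ∨ ε i = -1)
    (hdim : (∀ B, Nb A B → B.Finite ∧ B.ncard ≤ d + 1) ∧
            (∃ B, Nb A B ∧ B.Finite ∧ B.ncard = d + 1))
    (b : Fin n → ℝ)
    (hnbr : Nb A {0, b}) :
    ({u ∈ A | (∀ i, 0 ≤ ε i * u i) ∧ (∀ i, 0 ≤ ε i * (b i - u i))}).Finite ∧
    ({u ∈ A | (∀ i, 0 ≤ ε i * u i) ∧ (∀ i, 0 ≤ ε i * (b i - u i))}).ncard ≤ d + 1 := by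
  refine hdim.1 _ (hnbr.of_vsup_le_s6 (fun u hu => hu.1) fun i => ?_)
  rw [vsup_pair]
  refine iSup₂_le fun u hu => EReal.coe_le_coe_iff.2 ?_
  exact le_max_zero_of_mem_orthant_cuboid (hε i) (hu.2.1 i) (hu.2.2 i)

theorem stmt_6 (n d : ℕ) (A : Set (Fin n → ℝ))
    (ε : Fin n → ℝ) (hε : ∀ i, ε i = 1 ∨ ε i = -1)
    (hint : ∀ a ∈ A, ∀ i, ∃ m : ℤ, a i = (m : ℝ))
    (hdim : (∀ B, Nb A B → B.Finite ∧ B.ncard ≤ d + 1) ∧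
            (∃ B, Nb A B ∧ B.Finite ∧ B.ncard = d + 1))
    (h0 : (0 : Fin n → ℝ) ∈ A)
    (b : Fin n → ℝ) (hb : b ∈ A) (hbP : ∀ i, 0 ≤ ε i * b i)
    (hnbr : Nb A {0, b}) :
    ({u ∈ A | (∀ i, 0 ≤ ε i * u i) ∧ (∀ i, 0 ≤ ε i * (b i - u i))}).Finite ∧
    ({u ∈ A | (∀ i, 0 ≤ ε i * u i) ∧ (∀ i, 0 ≤ ε i * (b i - u i))}).ncard ≤ d + 1 :=
  stmt_6_general n d A ε hε hdim b hnbr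
end

section
/- Let a₀ = (0,0,1) and a_i = (i, 1/i, (i−1)/i) for i ≥ 1, and A = {a₀, a₁, a₂, …} ⊆ ℝ³. Then no 4-element subset of A belongs to Nb(A); hence dim Nb(A) ≤ 2. -/
/-- `a 0 = (0,0,1)` and `a i = (i, 1/i, (i-1)/i)` for `i ≥ 1`. -/
noncomputable def seqA : ℕ → (Fin 3 → ℝ) := fun i =>
  if i = 0 then ![0, 0, 1] else ![(i : ℝ), 1 / (i : ℝ), ((i : ℝ) - 1) / (i : ℝ)]

/-!
Among four points of `A` at least three are `a_i, a_j, a_k` with `1 ≤ i < j < k`. The middle one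
is strictly below the coordinatewise sup of these three: `j < k`, `1/j < 1/i` and
`1 - 1/j < 1 - 1/k`.
-/

theorem Set.exists_lt_lt_of_two_lt_ncard {α : Type*} [LinearOrder α] {s : Set α}
    (hs : 2 < s.ncard) : ∃ a ∈ s, ∃ b ∈ s, ∃ c ∈ s, a < b ∧ b < c := by
  have hfin : s.Finite := Set.finite_of_ncard_pos (by omega)
  set t := hfin.toFinset
  have ht : 2 < t.card := by rwa [← Set.ncard_eq_toFinset_card s hfin]
  have hne : t.Nonempty := Finset.card_pos.1 (by omega)
  have herase : 1 < (t.erase (t.min' hne)).card := by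
    rw [Finset.card_erase_of_mem (t.min'_mem hne)]; omega
  obtain ⟨b, hb, hb_max⟩ := Finset.exists_mem_ne herase (t.max' hne)
  obtain ⟨hb_min, hb⟩ := Finset.mem_erase.1 hb
  refine ⟨_, hfin.mem_toFinset.1 (t.min'_mem hne), b, hfin.mem_toFinset.1 hb,
    _, hfin.mem_toFinset.1 (t.max'_mem hne), ?_, ?_⟩
  · exact lt_of_le_of_ne (t.min'_le b hb) hb_min.symm
  · exact lt_of_le_of_ne (t.le_max' b hb) hb_max

theorem not_nb_of_forall_exists_lt {n : ℕ} {A B : Set (Fin n → ℝ)} {a : Fin n → ℝ} (ha : a ∈ A)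
    (h : ∀ c, ∃ b ∈ B, a c < b c) : ¬ Nb A B := by
  rintro ⟨-, hnb⟩
  refine hnb ⟨a, ha, fun c => ?_⟩
  obtain ⟨b, hb, hlt⟩ := h c
  exact (EReal.coe_lt_coe_iff.2 hlt).trans_le (le_biSup (fun b : Fin n → ℝ => (b c : EReal)) hb)

namespace seqA

theorem apply_zero (n : ℕ) : seqA n 0 = n := by
  by_cases hn : n = 0 <;> simp [seqA, hn]

theorem injective : Function.Injective seqA := fun m n h => by
  simpa [apply_zero] using congrFun h 0

theorem apply_one {n : ℕ} (hn : n ≠ 0) : seqA n 1 = 1 / n := by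
  simp [seqA, hn]

theorem apply_two {n : ℕ} (hn : n ≠ 0) : seqA n 2 = 1 - 1 / n := by
  have : (n : ℝ) ≠ 0 := Nat.cast_ne_zero.2 hn
  simp [seqA, hn, sub_div, this]

theorem not_nb_of_mem_of_lt {B : Set (Fin 3 → ℝ)} {i j k : ℕ} (hi : seqA i ∈ B) (hk : seqA k ∈ B)
    (hi0 : i ≠ 0) (hij : i < j) (hjk : j < k) : ¬ Nb (Set.range seqA) B := by
  have hj0 : j ≠ 0 := by omega
  have hk0 : k ≠ 0 := by omega
  have hi_pos : (0 : ℝ) < i := by exact_mod_cast Nat.pos_of_ne_zero hi0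
  have hij' : (i : ℝ) < j := by exact_mod_cast hij
  have hjk' : (j : ℝ) < k := by exact_mod_cast hjk
  refine not_nb_of_forall_exists_lt (Set.mem_range_self j) fun c => ?_
  fin_cases c
  · exact ⟨_, hk, by simpa [apply_zero] using hjk'⟩
  · refine ⟨_, hi, ?_⟩
    simpa [apply_one hi0, apply_one hj0] using one_div_lt_one_div_of_lt hi_pos hij'
  · refine ⟨_, hk, ?_⟩
    simpa [apply_two hj0, apply_two hk0] using one_div_lt_one_div_of_lt (hi_pos.trans hij') hjk'

end seqA

theorem stmt_11 :
    ∀ B ⊆ Set.range seqA, B.Finite → B.ncard = 4 → ¬ Nb (Set.range seqA) B := by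
  intro B hBA _ hcard
  have hpre : (seqA ⁻¹' B).ncard = 4 :=
    (Set.ncard_preimage_of_injective_subset_range seqA.injective hBA).trans hcard
  have hpos : 2 < (seqA ⁻¹' B \ {0}).ncard := by
    have := Set.pred_ncard_le_ncard_sdiff_singleton (seqA ⁻¹' B) 0
    omega
  obtain ⟨i, ⟨hi, hi0⟩, j, -, k, ⟨hk, -⟩, hij, hjk⟩ := Set.exists_lt_lt_of_two_lt_ncard hpos
  exact seqA.not_nb_of_mem_of_lt hi hk hi0 hij hjk
end

section
/- Let a₀ = (0,0,1) and a_i = (i, 1/i, (i−1)/i) for i ≥ 1, and A = {a₀, a₁, …} ⊆ ℝ³. Then for every i ≥ 1, the set {a₀, a_i, a_{i+1}} belongs to Nb(A). -/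
theorem coe_lt_vsup_iff {n : ℕ} {B : Set (Fin n → ℝ)} {k : Fin n} {t : ℝ} :
    (t : EReal) < vsup B k ↔ ∃ b ∈ B, t < b k := by
  simp only [vsup, lt_biSup_iff, EReal.coe_lt_coe_iff]

theorem nb_iff {n : ℕ} {A B : Set (Fin n → ℝ)} :
    Nb A B ↔ B ⊆ A ∧ ∀ a ∈ A, ∃ k, ∀ b ∈ B, b k ≤ a k := by
  simp only [Nb, coe_lt_vsup_iff]
  push Not
  rfl

theorem seqA_apply_zero (j : ℕ) : seqA j 0 = j := by
  by_cases hj : j = 0 <;> simp [seqA, hj]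

-- At `j = 0` this holds because `1 / 0 = 0` in Lean.
theorem seqA_apply_one (j : ℕ) : seqA j 1 = 1 / j := by
  by_cases hj : j = 0 <;> simp [seqA, hj]

theorem seqA_apply_two_le_one (j : ℕ) : seqA j 2 ≤ 1 := by
  by_cases hj : j = 0
  · simp [seqA, hj]
  · have hj_pos : (0 : ℝ) < j := by positivity
    simp only [seqA, hj, if_false]
    exact (div_le_one hj_pos).2 (by simp)

theorem seqA_zero_apply_two : seqA 0 2 = 1 := by
  simp [seqA]

theorem stmt_12 :
    ∀ i : ℕ, 1 ≤ i → Nb (Set.range seqA) {seqA 0, seqA i, seqA (i + 1)} := by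
  intro i _
  refine nb_iff.2 ⟨by rintro _ (rfl | rfl | rfl) <;> exact Set.mem_range_self _, ?_⟩
  rintro _ ⟨j, rfl⟩
  rcases Nat.eq_zero_or_pos j with rfl | hj
  · refine ⟨2, ?_⟩
    rintro _ (rfl | rfl | rfl) <;> rw [seqA_zero_apply_two] <;> exact seqA_apply_two_le_one _
  rcases le_or_gt j i with hji | hij
  · refine ⟨1, ?_⟩
    have hj_pos : (0 : ℝ) < j := by exact_mod_cast hj
    rintro _ (rfl | rfl | rfl) <;> rw [seqA_apply_one, seqA_apply_one]
    · simp only [Nat.cast_zero, div_zero]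
      positivity
    · exact one_div_le_one_div_of_le hj_pos (by exact_mod_cast hji)
    · exact one_div_le_one_div_of_le hj_pos (by exact_mod_cast hji.trans i.le_succ)
  · refine ⟨0, ?_⟩
    rintro _ (rfl | rfl | rfl) <;> simp only [seqA_apply_zero] <;> exact_mod_cast (by omega)
end

section
/- Let A ⊆ ℝ^n and suppose a, a' ∈ A are A-neighbors with a_i ≠ a'_i for every coordinate i. If B ∈ Nb(A) contains both a and a', then for each coordinate i, at most one of a, a' attains the maximum (∨B)_i. Consequently, in a generic set A (all pairs of neighbors differ in every coordinate and at most one point of A ∩ {x ≤ ∨B} attains each coordinate of ∨B), every simplex B ∈ Nb(A) satisfies card B ≤ n. -/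
section NeighborComplex

variable {n : ℕ} {A B : Set (Fin n → ℝ)} {b : Fin n → ℝ}

theorem coe_le_vsup (hb : b ∈ B) (i : Fin n) : ((b i : ℝ) : EReal) ≤ vsup B i :=
  le_iSup₂ (f := fun b (_ : b ∈ B) => ((b i : ℝ) : EReal)) b hb

theorem Nb.exists_coe_eq_vsup (hB : Nb A B) (hb : b ∈ B) :
    ∃ i, ((b i : ℝ) : EReal) = vsup B i := by
  have hnot : ¬ ∀ i, ((b i : ℝ) : EReal) < vsup B i := fun h => hB.2 ⟨b, hB.1 hb, h⟩
  obtain ⟨i, hi⟩ := not_forall.mp hnot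
  exact ⟨i, (coe_le_vsup hb i).antisymm (not_lt.mp hi)⟩

/-- Choosing for each vertex a coordinate in which it attains `∨B` injects `B` into `Fin n`. -/
theorem Nb.finite_and_ncard_le (hB : Nb A B)
    (huniq : ∀ i, {b ∈ B | ((b i : ℝ) : EReal) = vsup B i}.Subsingleton) :
    B.Finite ∧ B.ncard ≤ n := by
  choose f hf using fun b : B => hB.exists_coe_eq_vsup b.2
  have hinj : Function.Injective f := by
    rintro ⟨b, hb⟩ ⟨b', hb'⟩ hfb
    exact Subtype.ext <| huniq (f ⟨b', hb'⟩) ⟨hb, hfb ▸ hf ⟨b, hb⟩⟩ ⟨hb', hf ⟨b', hb'⟩⟩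
  refine ⟨Set.finite_coe_iff.mp (Finite.of_injective f hinj), ?_⟩
  simpa [Nat.card_coe_set_eq] using Nat.card_le_card_of_injective f hinj

end NeighborComplex

theorem stmt_14 (n : ℕ) (A : Set (Fin n → ℝ)) :
    (∀ a ∈ A, ∀ a' ∈ A, Nb A {a, a'} → (∀ i, a i ≠ a' i) →
      ∀ B, Nb A B → a ∈ B → a' ∈ B →
        ∀ i, ¬ (((a i : ℝ) : EReal) = vsup B i ∧ ((a' i : ℝ) : EReal) = vsup B i)) ∧
    ((∀ a ∈ A, ∀ a' ∈ A, a ≠ a' → Nb A {a, a'} → ∀ i, a i ≠ a' i) →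
     (∀ B, Nb A B → ∀ i,
        Set.Subsingleton
          {a ∈ A | (∀ j, ((a j : ℝ) : EReal) ≤ vsup B j) ∧ ((a i : ℝ) : EReal) = vsup B i}) →
     ∀ B, Nb A B → B.Finite ∧ B.ncard ≤ n) := by
  refine ⟨?_, fun _ hgeneric B hB => hB.finite_and_ncard_le fun i => ?_⟩
  · rintro a - a' - - hne B - - - i ⟨ha, ha'⟩
    exact hne i (EReal.coe_injective (ha.trans ha'.symm))
  · exact (hgeneric B hB i).anti fun b ⟨hb, hbi⟩ => ⟨hB.1 hb, fun j => coe_le_vsup hb j, hbi⟩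
end

section
/- Let A ⊆ ℝ^n, a ∈ A, B ∈ Nb(A), and suppose the coordinatewise supremum satisfies a ≤ ∨B. Then B ∪ {a} ∈ Nb(A). In particular, if dim Nb(A) = d, then for each B ∈ Nb(A), A ∩ {x : x ≤ ∨B} has at most d+1 elements. -/
theorem vsup_le_iff {n : ℕ} {B : Set (Fin n → ℝ)} {v : Fin n → EReal} :
    vsup B ≤ v ↔ ∀ b ∈ B, ∀ i, ((b i : ℝ) : EReal) ≤ v i := by
  simp only [Pi.le_def, vsup, iSup₂_le_iff]
  exact ⟨fun h b hb i => h i b hb, fun h i b hb => h b hb i⟩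

/-- Beyond `C ⊆ A`, the condition `Nb A C` depends on `C` only through `vsup C`, antitonely. -/
theorem Nb.of_forall_le_vsup {n : ℕ} {A B C : Set (Fin n → ℝ)} (hB : Nb A B) (hCA : C ⊆ A)
    (hC : ∀ c ∈ C, ∀ i, ((c i : ℝ) : EReal) ≤ vsup B i) : Nb A C := by
  have hle : vsup C ≤ vsup B := vsup_le_iff.mpr hC
  exact ⟨hCA, fun ⟨a, ha, hlt⟩ => hB.2 ⟨a, ha, fun i => (hlt i).trans_le (hle i)⟩⟩

theorem Nb.union_singleton {n : ℕ} {A B : Set (Fin n → ℝ)} {a : Fin n → ℝ} (hB : Nb A B)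
    (ha : a ∈ A) (hle : ∀ i, ((a i : ℝ) : EReal) ≤ vsup B i) : Nb A (B ∪ {a}) := by
  refine hB.of_forall_le_vsup (Set.union_subset hB.1 (Set.singleton_subset_iff.mpr ha)) ?_
  rintro c (hc | rfl)
  · exact vsup_le_iff.mp le_rfl c hc
  · exact hle

theorem Nb.setOf_le_vsup {n : ℕ} {A B : Set (Fin n → ℝ)} (hB : Nb A B) :
    Nb A {a ∈ A | ∀ i, ((a i : ℝ) : EReal) ≤ vsup B i} :=
  hB.of_forall_le_vsup (fun _ ha => ha.1) fun _ ha => ha.2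

theorem stmt_18 (n d : ℕ) (A : Set (Fin n → ℝ)) :
    (∀ a ∈ A, ∀ B, Nb A B → (∀ i, ((a i : ℝ) : EReal) ≤ vsup B i) →
      Nb A (B ∪ {a})) ∧
    (((∀ B, Nb A B → B.Finite ∧ B.ncard ≤ d + 1) ∧
      (∃ B, Nb A B ∧ B.Finite ∧ B.ncard = d + 1)) →
     ∀ B, Nb A B →
       ({a ∈ A | ∀ i, ((a i : ℝ) : EReal) ≤ vsup B i}).Finite ∧
       ({a ∈ A | ∀ i, ((a i : ℝ) : EReal) ≤ vsup B i}).ncard ≤ d + 1) :=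
  ⟨fun _ ha _ hB hle => hB.union_singleton ha hle,
    fun ⟨hdim, _⟩ _ hB => hdim _ hB.setOf_le_vsup⟩
end
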